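/- arXiv:1809.02477 — 4 statements merged into one kernel-verified Lean document; each statement's English description precedes it below -/
import Mathlib

section
/- Fix an integer q ≥ 2 and let X = (X_k)_{k∈ℕ} be a sequence of independent integrable real random variables with E[X_k] = 0 for every k and such that no X_k is almost surely constant. Let d > q be an integer. Suppose (F_n)_{n≥1} is a sequence of random variables of the form F_n = E[F_n] + Σ_{p=1}^q Q_p(f_{p,n}; X), where each f_{p,n} is a kernel of order p whose support is contained in {1,…,d}^p, and suppose F_n converges almost surely to a random variable F of the form F = E[F] + Σ_{p=1}^q Q_p(f_p; X) with each f_p a kernel of order p supported in {1,…,d}^p. Then, as n → ∞, E[F_n] → E[F], and for each p ∈ {1,…,q}, Q_p(f_{p,n}; X) converges almost surely to Q_p(f_p; X). -/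
/-
A kernel supported on `{0,…,d-1}^p` is a finite vector of real coefficients, so `Fₙ` and `F`
are images of points `xₙ`, `x` of a finite-dimensional space `V` of symmetric, diagonal-free
coefficient vectors (the constant being the order-0 part), and the value at a sample point `ω`
is a linear functional `ℓ_ω` on `V`. For `ω` ranging over any set of full measure these
functionals separate the points of `V`: to see that `∑_u x_u X^u = 0` a.s. forces `x = 0`, test
against `Φ_u = ∏_{j ∈ u} (1{X_j > 0} - P(X_j > 0))`. By independence and centring,
`E[Φ_u X^v] = 0` for `v ≠ u`, while `E[Φ_u X^u] = ∏_{j ∈ u} E[X_j⁺]`, which is nonzero because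
no `X_j` is a.s. constant. Hence the `ℓ_ω` span the dual of `V`, and the a.s. convergence
`ℓ_ω(xₙ) = Fₙ(ω) → F(ω) = ℓ_ω(x)` yields `φ(xₙ) → φ(x)` for every linear functional `φ`,
in particular for `E[Fₙ]` and for every coefficient of `f_{p,n}`.
-/

open MeasureTheory ProbabilityTheory Filter
open scoped ENNReal NNReal

/-- A kernel of order `p`: a function on `p`-tuples of indices that is symmetric in its
arguments and vanishes on diagonals. -/
def IsKernel {p : ℕ} (f : (Fin p → ℕ) → ℝ) : Prop :=
  (∀ (σ : Equiv.Perm (Fin p)) (i : Fin p → ℕ), f (i ∘ σ) = f i) ∧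
  (∀ i : Fin p → ℕ, ¬ Function.Injective i → f i = 0)

/-- The homogeneous sum `Q_p(f; X) = ∑_{i₁,…,i_p} f(i₁,…,i_p) X_{i₁} ⋯ X_{i_p}` for a kernel
`f` supported on indices `< d`; it is the finite sum over indices in `{0, …, d-1}`. -/
noncomputable def homSum {Ω : Type*} (p d : ℕ) (f : (Fin p → ℕ) → ℝ)
    (X : ℕ → Ω → ℝ) (ω : Ω) : ℝ :=
  ∑ i : Fin p → Fin d, f (fun k => (i k : ℕ)) * ∏ k, X (i k : ℕ) ω

open scoped Topology

theorem Module.Dual.tendsto_of_forall_tendsto_of_separating {𝕜 V ι β : Type*} [Field 𝕜]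
    [TopologicalSpace 𝕜] [ContinuousAdd 𝕜] [ContinuousMul 𝕜] [AddCommGroup V] [Module 𝕜 V]
    [FiniteDimensional 𝕜 V] {ℓ : ι → Module.Dual 𝕜 V} (hsep : ∀ v, (∀ i, ℓ i v = 0) → v = 0)
    {l : Filter β} {x : β → V} {y : V}
    (hx : ∀ i, Tendsto (fun n => ℓ i (x n)) l (𝓝 (ℓ i y))) (φ : Module.Dual 𝕜 V) :
    Tendsto (fun n => φ (x n)) l (𝓝 (φ y)) := by
  have hspan : Submodule.span 𝕜 (Set.range ℓ) = ⊤ := by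
    have hco : (Submodule.span 𝕜 (Set.range ℓ)).dualCoannihilator = ⊥ := by
      refine (Submodule.eq_bot_iff _).2 fun v hv => hsep v fun i => ?_
      exact (Submodule.mem_dualCoannihilator v).1 hv _ (Submodule.subset_span ⟨i, rfl⟩)
    rw [← Subspace.dualCoannihilator_dualAnnihilator_eq (W := Submodule.span 𝕜 (Set.range ℓ)),
      hco, Submodule.dualAnnihilator_bot]
  have hφ : φ ∈ Submodule.span 𝕜 (Set.range ℓ) := hspan ▸ Submodule.mem_top
  induction hφ using Submodule.span_induction with
  | mem ψ hψ => obtain ⟨i, rfl⟩ := hψ; exact hx i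
  | zero => simpa using tendsto_const_nhds
  | add ψ₁ ψ₂ _ _ h₁ h₂ => simpa using h₁.add h₂
  | smul c ψ _ h => simpa using h.const_mul c

def symmKernels (p : ℕ) (α : Type*) : Submodule ℝ ((Fin p → α) → ℝ) where
  carrier := {g | (∀ (σ : Equiv.Perm (Fin p)) i, g (i ∘ σ) = g i) ∧
    ∀ i, ¬ Function.Injective i → g i = 0}
  add_mem' ha hb := ⟨fun σ i => by simp [ha.1 σ i, hb.1 σ i],
    fun i hi => by simp [ha.2 i hi, hb.2 i hi]⟩
  zero_mem' := ⟨fun _ _ => rfl, fun _ _ => rfl⟩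
  smul_mem' c _ ha := ⟨fun σ i => by simp [ha.1 σ i], fun i hi => by simp [ha.2 i hi]⟩

lemma isKernel_iff_mem_symmKernels {p : ℕ} {f : (Fin p → ℕ) → ℝ} :
    IsKernel f ↔ f ∈ symmKernels p ℕ := Iff.rfl

lemma mem_symmKernels_zero {α : Type*} (g : (Fin 0 → α) → ℝ) : g ∈ symmKernels 0 α :=
  ⟨fun _ _ => congrArg g (Subsingleton.elim _ _),
    fun i hi => absurd (Function.injective_of_subsingleton i) hi⟩

lemma Function.Injective.exists_perm_eq_comp_of_range_eq {p : ℕ} {α : Type*} {i i₀ : Fin p → α}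
    (hi : Function.Injective i) (hi₀ : Function.Injective i₀) (h : Set.range i = Set.range i₀) :
    ∃ σ : Equiv.Perm (Fin p), i = i₀ ∘ σ :=
  ⟨(Equiv.ofInjective i hi).trans ((Equiv.setCongr h).trans (Equiv.ofInjective i₀ hi₀).symm),
    funext fun k => by simp [Equiv.apply_ofInjective_symm hi₀]⟩

namespace symmKernels

variable {p : ℕ} {α β : Type*} {g : (Fin p → α) → ℝ}

lemma comp_mem {f : (Fin p → β) → ℝ} (hf : f ∈ symmKernels p β) (e : α → β) :
    (fun i => f (e ∘ i)) ∈ symmKernels p α :=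
  ⟨fun σ i => hf.1 σ (e ∘ i), fun _ hi => hf.2 _ fun h => hi h.of_comp⟩

variable [DecidableEq α]

lemma apply_eq_of_image_eq (hg : g ∈ symmKernels p α) {i i₀ : Fin p → α}
    (hi₀ : Function.Injective i₀) (h : Finset.univ.image i = Finset.univ.image i₀) :
    g i = g i₀ := by
  have hi : Function.Injective i := by
    have hcard : (Finset.univ.image i).card = (Finset.univ : Finset (Fin p)).card := by
      rw [h, Finset.card_image_of_injective _ hi₀]
    simpa using Finset.card_image_iff.1 hcard
  obtain ⟨σ, rfl⟩ := hi.exists_perm_eq_comp_of_range_eq hi₀ (by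
    simpa [Set.ext_iff, Finset.ext_iff] using h)
  exact hg.1 σ i₀

lemma apply_eq_zero_of_card_image_ne (hg : g ∈ symmKernels p α) {i : Fin p → α}
    (h : (Finset.univ.image i).card ≠ p) : g i = 0 :=
  hg.2 i fun hi => h (by
    rw [Finset.card_image_of_injective _ hi, Finset.card_univ, Fintype.card_fin])

lemma mul_prod_eq_mul_prod_image (hg : g ∈ symmKernels p α) (i : Fin p → α) (a : α → ℝ) :
    g i * ∏ k, a (i k) = g i * ∏ j ∈ Finset.univ.image i, a j := by
  by_cases hi : Function.Injective i
  · rw [Finset.prod_image fun _ _ _ _ h => hi h]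
  · rw [hg.2 i hi, zero_mul, zero_mul]

end symmKernels

def chaosCoeffSpace (P : Finset ℕ) (α : Type*) : Submodule ℝ (∀ p : P, (Fin p → α) → ℝ) :=
  Submodule.pi Set.univ fun p => symmKernels p α

noncomputable def chaosSum {Ω α : Type*} [Fintype α] (P : Finset ℕ) (Y : α → Ω → ℝ) (ω : Ω) :
    (∀ p : P, (Fin p → α) → ℝ) →ₗ[ℝ] ℝ where
  toFun x := ∑ p, ∑ i, x p i * ∏ k, Y (i k) ω
  map_add' x y := by simp only [Pi.add_apply, add_mul, Finset.sum_add_distrib]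
  map_smul' c x := by simp only [Pi.smul_apply, smul_eq_mul, mul_assoc, Finset.mul_sum,
    RingHom.id_apply]

lemma chaosSum_apply {Ω α : Type*} [Fintype α] (P : Finset ℕ) (Y : α → Ω → ℝ) (ω : Ω)
    (x : ∀ p : P, (Fin p → α) → ℝ) :
    chaosSum P Y ω x = ∑ p, ∑ i, x p i * ∏ k, Y (i k) ω := rfl

lemma ae_eq_zero_of_integral_eq_zero_of_integral_max_zero {Ω : Type*} [MeasurableSpace Ω]
    {μ : Measure Ω} {Y : Ω → ℝ} (hY : Integrable Y μ) (hmean : ∫ ω, Y ω ∂μ = 0)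
    (hpos : ∫ ω, max (Y ω) 0 ∂μ = 0) : Y =ᵐ[μ] 0 := by
  have hle : ∀ᵐ ω ∂μ, Y ω ≤ 0 := by
    filter_upwards [(integral_eq_zero_iff_of_nonneg (fun ω => le_max_right _ _) hY.pos_part).1
      hpos] with ω h
    simpa using h
  have hneg : -Y =ᵐ[μ] 0 :=
    (integral_eq_zero_iff_of_nonneg_ae (hle.mono fun ω h => by simpa using h) hY.neg).1
      (by simp [integral_neg, hmean])
  filter_upwards [hneg] with ω h
  simpa using h

section Probability

variable {Ω : Type*} [MeasurableSpace Ω] {μ : Measure Ω} [IsProbabilityMeasure μ]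

lemma exists_centered_test_function {Y : Ω → ℝ} (hY : Measurable Y) (hint : Integrable Y μ)
    (hmean : ∫ ω, Y ω ∂μ = 0) (hnd : ¬ ∃ c : ℝ, Y =ᵐ[μ] fun _ => c) :
    ∃ g : ℝ → ℝ, Measurable g ∧ Integrable (fun ω => g (Y ω)) μ ∧
      Integrable (fun ω => g (Y ω) * Y ω) μ ∧ ∫ ω, g (Y ω) ∂μ = 0 ∧
      ∫ ω, g (Y ω) * Y ω ∂μ ≠ 0 := by
  set s := ∫ ω, (if 0 < Y ω then (1 : ℝ) else 0) ∂μ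
  have hind : Measurable fun y : ℝ => if 0 < y then (1 : ℝ) else 0 :=
    Measurable.ite measurableSet_Ioi measurable_const measurable_const
  have hind_int : Integrable (fun ω => if 0 < Y ω then (1 : ℝ) else 0) μ :=
    Integrable.of_bound (hind.comp hY).aestronglyMeasurable 1
      (Eventually.of_forall fun ω => by split_ifs <;> simp)
  have hmul : ∀ y : ℝ, ((if 0 < y then 1 else 0) - s) * y = max y 0 - s * y := fun y => by
    split_ifs with h
    · rw [max_eq_left h.le]; ring
    · rw [max_eq_right (not_lt.1 h)]; ring
  refine ⟨fun y => (if 0 < y then 1 else 0) - s, hind.sub measurable_const,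
    hind_int.sub (integrable_const s), ?_, ?_, ?_⟩
  · simp only [hmul]
    exact hint.pos_part.sub (hint.const_mul s)
  · rw [integral_sub hind_int (integrable_const s)]
    simp [s]
  · simp only [hmul]
    rw [integral_sub hint.pos_part (hint.const_mul s), integral_const_mul, hmean, mul_zero,
      sub_zero]
    exact fun hpos =>
      hnd ⟨0, ae_eq_zero_of_integral_eq_zero_of_integral_max_zero hint hmean hpos⟩

lemma Finset.prod_mul_prod_eq_prod_ite {α R : Type*} [Fintype α] [DecidableEq α] [CommMonoid R]
    (u v : Finset α) (a b : α → R) :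
    (∏ j ∈ u, a j) * ∏ j ∈ v, b j =
      ∏ j, (if j ∈ u then a j else 1) * (if j ∈ v then b j else 1) := by
  rw [Finset.prod_mul_distrib, Finset.prod_ite_mem, Finset.prod_ite_mem, Finset.univ_inter,
    Finset.univ_inter]

lemma ProbabilityTheory.iIndepFun.integrable_fun_finsetProd {ι : Type*} {Z : ι → Ω → ℝ}
    (hZ : iIndepFun Z μ) (hmeas : ∀ i, Measurable (Z i)) (hint : ∀ i, Integrable (Z i) μ)
    (s : Finset ι) :
    Integrable (fun ω => ∏ i ∈ s, Z i ω) μ := by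
  classical
  induction s using Finset.induction_on with
  | empty => simp
  | insert j s hj ih =>
    simp_rw [Finset.prod_insert hj]
    rw [← Finset.prod_fn] at ih
    convert (hZ.indepFun_finsetProd_of_notMem hmeas hj).symm.integrable_mul (hint j) ih using 1
    ext ω
    simp

variable {α : Type*} [Fintype α] [DecidableEq α] {Y : α → Ω → ℝ} {g : α → ℝ → ℝ}

lemma integrable_prod_mul_prod (hY : iIndepFun Y μ) (hmeas : ∀ j, Measurable (Y j))
    (hint : ∀ j, Integrable (Y j) μ) (hg : ∀ j, Measurable (g j))
    (hgi : ∀ j, Integrable (fun ω => g j (Y j ω)) μ)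
    (hgYi : ∀ j, Integrable (fun ω => g j (Y j ω) * Y j ω) μ) (u v : Finset α) :
    Integrable (fun ω => (∏ j ∈ u, g j (Y j ω)) * ∏ j ∈ v, Y j ω) μ := by
  let G : α → ℝ → ℝ := fun j y => (if j ∈ u then g j y else 1) * (if j ∈ v then y else 1)
  have hG : ∀ j, Measurable (G j) := fun j => by
    have := hg j
    dsimp only [G]
    split_ifs <;> fun_prop
  simp_rw [Finset.prod_mul_prod_eq_prod_ite]
  refine (hY.comp G hG).integrable_fun_finsetProd (fun j => (hG j).comp (hmeas j))
    (fun j => ?_) Finset.univ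
  dsimp only [G, Function.comp_def]
  split_ifs
  · exact hgYi j
  · simpa using hgi j
  · simpa using hint j
  · simp

lemma integral_prod_mul_prod (hY : iIndepFun Y μ) (hmeas : ∀ j, Measurable (Y j))
    (hmean : ∀ j, ∫ ω, Y j ω ∂μ = 0) (hg : ∀ j, Measurable (g j))
    (hg0 : ∀ j, ∫ ω, g j (Y j ω) ∂μ = 0) (u v : Finset α) :
    ∫ ω, (∏ j ∈ u, g j (Y j ω)) * ∏ j ∈ v, Y j ω ∂μ =
      if u = v then ∏ j ∈ u, ∫ ω, g j (Y j ω) * Y j ω ∂μ else 0 := by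
  let G : α → ℝ → ℝ := fun j y => (if j ∈ u then g j y else 1) * (if j ∈ v then y else 1)
  have hG : ∀ j, Measurable (G j) := fun j => by
    have := hg j
    dsimp only [G]
    split_ifs <;> fun_prop
  simp_rw [Finset.prod_mul_prod_eq_prod_ite]
  rw [hY.integral_fun_prod_comp (f := G) (fun j => (hmeas j).aemeasurable)
    (fun j => (hG j).aestronglyMeasurable)]
  split_ifs with huv
  · subst huv
    rw [← Finset.univ_inter u, ← Finset.prod_ite_mem]
    refine Finset.prod_congr rfl fun j _ => ?_
    dsimp only [G]
    split_ifs <;> simp_all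
  · obtain ⟨j, hj⟩ : ∃ j, ¬(j ∈ u ↔ j ∈ v) := by
      by_contra! h
      exact huv (Finset.ext h)
    refine Finset.prod_eq_zero (Finset.mem_univ j) ?_
    dsimp only [G]
    split_ifs <;> simp_all

lemma integral_prod_mul_chaosSum (hY : iIndepFun Y μ) (hmeas : ∀ j, Measurable (Y j))
    (hint : ∀ j, Integrable (Y j) μ) (hmean : ∀ j, ∫ ω, Y j ω ∂μ = 0)
    (hg : ∀ j, Measurable (g j)) (hgi : ∀ j, Integrable (fun ω => g j (Y j ω)) μ)
    (hgYi : ∀ j, Integrable (fun ω => g j (Y j ω) * Y j ω) μ)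
    (hg0 : ∀ j, ∫ ω, g j (Y j ω) ∂μ = 0) {P : Finset ℕ} {x : ∀ p : P, (Fin p → α) → ℝ}
    (hx : ∀ p : P, x p ∈ symmKernels p α) (u : Finset α) :
    ∫ ω, (∏ j ∈ u, g j (Y j ω)) * chaosSum P Y ω x ∂μ =
      (∏ j ∈ u, ∫ ω, g j (Y j ω) * Y j ω ∂μ) *
        ∑ p, ∑ i with Finset.univ.image i = u, x p i := by
  have hexpand : ∀ ω, (∏ j ∈ u, g j (Y j ω)) * chaosSum P Y ω x = ∑ p, ∑ i,
      x p i * ((∏ j ∈ u, g j (Y j ω)) * ∏ j ∈ Finset.univ.image i, Y j ω) := fun ω => by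
    rw [chaosSum_apply, Finset.mul_sum]
    refine Finset.sum_congr rfl fun p _ => ?_
    rw [Finset.mul_sum]
    refine Finset.sum_congr rfl fun i _ => ?_
    linear_combination (∏ j ∈ u, g j (Y j ω)) *
      symmKernels.mul_prod_eq_mul_prod_image (hx p) i (Y · ω)
  have hterm := integrable_prod_mul_prod hY hmeas hint hg hgi hgYi u
  simp_rw [hexpand]
  rw [integral_finsetSum _ fun p _ => integrable_finsetSum _ fun i _ => (hterm _).const_mul _]
  simp_rw [integral_finsetSum _ fun i _ => (hterm _).const_mul _, integral_const_mul,
    integral_prod_mul_prod hY hmeas hmean hg hg0, Finset.mul_sum, Finset.sum_filter]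
  refine Finset.sum_congr rfl fun p _ => Finset.sum_congr rfl fun i _ => ?_
  simp only [eq_comm (a := u)]
  split_ifs <;> ring

theorem eq_zero_of_chaosSum_ae_eq_zero (hY : iIndepFun Y μ) (hmeas : ∀ j, Measurable (Y j))
    (hint : ∀ j, Integrable (Y j) μ) (hmean : ∀ j, ∫ ω, Y j ω ∂μ = 0)
    (hnd : ∀ j, ¬ ∃ c : ℝ, Y j =ᵐ[μ] fun _ => c) {P : Finset ℕ}
    {x : ∀ p : P, (Fin p → α) → ℝ} (hx : ∀ p : P, x p ∈ symmKernels p α)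
    (h0 : ∀ᵐ ω ∂μ, chaosSum P Y ω x = 0) : x = 0 := by
  choose g hg hgi hgYi hg0 hgY using
    fun j => exists_centered_test_function (hmeas j) (hint j) (hmean j) (hnd j)
  have hsum : ∀ u : Finset α, ∑ p, ∑ i with Finset.univ.image i = u, x p i = 0 := fun u => by
    have h := integral_prod_mul_chaosSum hY hmeas hint hmean hg hgi hgYi hg0 hx u
    rw [integral_eq_zero_of_ae (h0.mono fun ω hω => by simp [hω])] at h
    exact (mul_eq_zero.1 h.symm).resolve_left (Finset.prod_ne_zero_iff.2 fun j _ => hgY j)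
  -- For `u` the image of an injective `i`, only the order `p` contributes to `hsum u`, and there
  -- every term equals `x p i` by symmetry.
  funext p i
  by_cases hi : Function.Injective i
  · have h := hsum (Finset.univ.image i)
    rw [Finset.sum_eq_single p (fun p' _ hp' => Finset.sum_eq_zero fun i' hi' => ?_)
      (fun h => absurd (Finset.mem_univ p) h)] at h
    · rw [Finset.sum_congr rfl fun i' hi' =>
        symmKernels.apply_eq_of_image_eq (hx p) hi (Finset.mem_filter.1 hi').2, Finset.sum_const,
        nsmul_eq_mul] at h
      exact (mul_eq_zero.1 h).resolve_left
        (Nat.cast_ne_zero.2 (Finset.card_ne_zero.2 ⟨i, by simp⟩))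
    · refine symmKernels.apply_eq_zero_of_card_image_ne (hx p') fun hcard => hp' (Subtype.ext ?_)
      rw [(Finset.mem_filter.1 hi').2, Finset.card_image_of_injective _ hi, Finset.card_univ,
        Fintype.card_fin] at hcard
      exact hcard.symm
  · exact (hx p).2 i hi

theorem tendsto_of_ae_tendsto_chaosSum (hY : iIndepFun Y μ) (hmeas : ∀ j, Measurable (Y j))
    (hint : ∀ j, Integrable (Y j) μ) (hmean : ∀ j, ∫ ω, Y j ω ∂μ = 0)
    (hnd : ∀ j, ¬ ∃ c : ℝ, Y j =ᵐ[μ] fun _ => c) {P : Finset ℕ} {β : Type*} {l : Filter β}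
    {x : β → chaosCoeffSpace P α} {y : chaosCoeffSpace P α}
    (hconv : ∀ᵐ ω ∂μ, Tendsto (fun n => chaosSum P Y ω (x n)) l (𝓝 (chaosSum P Y ω y)))
    (φ : Module.Dual ℝ (chaosCoeffSpace P α)) :
    Tendsto (fun n => φ (x n)) l (𝓝 (φ y)) :=
  Module.Dual.tendsto_of_forall_tendsto_of_separating
    (ℓ := fun ω : {ω // Tendsto (fun n => chaosSum P Y ω (x n)) l (𝓝 (chaosSum P Y ω y))} =>
      chaosSum P Y ω ∘ₗ (chaosCoeffSpace P α).subtype)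
    (fun v hv => Subtype.ext (eq_zero_of_chaosSum_ae_eq_zero hY hmeas hint hmean hnd
      (fun p => v.2 p trivial) (hconv.mono fun ω hω => hv ⟨ω, hω⟩)))
    (fun ω => ω.2) φ

end Probability

-- The constant term of a chaos expansion is stored as its component of order `0`.
noncomputable def chaosCoeffs (d : ℕ) (c : ℝ) (g : (p : ℕ) → (Fin p → ℕ) → ℝ) (p : ℕ)
    (i : Fin p → Fin d) : ℝ :=
  if p = 0 then c else g p fun k => i k

lemma chaosCoeffs_mem_chaosCoeffSpace {q d : ℕ} (c : ℝ) {g : (p : ℕ) → (Fin p → ℕ) → ℝ}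
    (hg : ∀ p ∈ Finset.Icc 1 q, IsKernel (g p)) :
    (fun p : (insert 0 (Finset.Icc 1 q) : Finset ℕ) => chaosCoeffs d c g p) ∈
      chaosCoeffSpace (insert 0 (Finset.Icc 1 q)) (Fin d) := by
  rintro ⟨p, hp⟩ -
  rcases Finset.mem_insert.1 hp with rfl | hp
  · exact mem_symmKernels_zero _
  · have hp0 : p ≠ 0 := by rw [Finset.mem_Icc] at hp; omega
    have heq : chaosCoeffs d c g p = fun i => g p (Fin.val ∘ i) := funext fun _ => if_neg hp0
    show chaosCoeffs d c g p ∈ symmKernels p (Fin d)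
    exact heq ▸ symmKernels.comp_mem (isKernel_iff_mem_symmKernels.1 (hg p hp)) Fin.val

lemma chaosSum_chaosCoeffs {Ω : Type*} (q d : ℕ) (X : ℕ → Ω → ℝ) (c : ℝ)
    (g : (p : ℕ) → (Fin p → ℕ) → ℝ) (ω : Ω) :
    chaosSum (insert 0 (Finset.Icc 1 q)) (fun j : Fin d => X j) ω
        (fun p => chaosCoeffs d c g p) =
      c + ∑ p ∈ Finset.Icc 1 q, homSum p d (g p) X ω := by
  rw [chaosSum_apply, Finset.sum_coe_sort (insert 0 (Finset.Icc 1 q))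
    (fun p => ∑ i : Fin p → Fin d, chaosCoeffs d c g p i * ∏ k, X (i k) ω),
    Finset.sum_insert (by simp)]
  congr 1
  · simp [chaosCoeffs]
  · refine Finset.sum_congr rfl fun p hp => ?_
    have hp0 : p ≠ 0 := by rw [Finset.mem_Icc] at hp; omega
    simp [chaosCoeffs, homSum, hp0]

theorem stmt1_general {Ω : Type*} [MeasurableSpace Ω] (μ : Measure Ω) [IsProbabilityMeasure μ]
    (q : ℕ)
    (X : ℕ → Ω → ℝ) (hXmeas : ∀ k, Measurable (X k))
    (hXindep : iIndepFun X μ)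
    (hXint : ∀ k, Integrable (X k) μ)
    (hXmean : ∀ k, ∫ ω, X k ω ∂μ = 0)
    (hXnondeg : ∀ k, ¬ ∃ c : ℝ, X k =ᵐ[μ] fun _ => c)
    (d : ℕ)
    (f : ℕ → (p : ℕ) → (Fin p → ℕ) → ℝ)
    (flim : (p : ℕ) → (Fin p → ℕ) → ℝ)
    (hf : ∀ n, ∀ p ∈ Finset.Icc 1 q, IsKernel (f n p))
    (hflim : ∀ p ∈ Finset.Icc 1 q, IsKernel (flim p))
    (F : ℕ → Ω → ℝ) (Flim : Ω → ℝ)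
    (hF : ∀ n, ∀ᵐ ω ∂μ,
      F n ω = (∫ ω', F n ω' ∂μ) + ∑ p ∈ Finset.Icc 1 q, homSum p d (f n p) X ω)
    (hFlim : ∀ᵐ ω ∂μ,
      Flim ω = (∫ ω', Flim ω' ∂μ) + ∑ p ∈ Finset.Icc 1 q, homSum p d (flim p) X ω)
    (hconv : ∀ᵐ ω ∂μ, Tendsto (fun n => F n ω) atTop (nhds (Flim ω))) :
    Tendsto (fun n => ∫ ω, F n ω ∂μ) atTop (nhds (∫ ω, Flim ω ∂μ)) ∧
    ∀ p ∈ Finset.Icc 1 q, ∀ᵐ ω ∂μ,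
      Tendsto (fun n => homSum p d (f n p) X ω) atTop (nhds (homSum p d (flim p) X ω)) := by
  set P := insert 0 (Finset.Icc 1 q)
  let x n : chaosCoeffSpace P (Fin d) :=
    ⟨fun p => chaosCoeffs d (∫ ω, F n ω ∂μ) (f n) p, chaosCoeffs_mem_chaosCoeffSpace _ (hf n)⟩
  let y : chaosCoeffSpace P (Fin d) :=
    ⟨fun p => chaosCoeffs d (∫ ω, Flim ω ∂μ) flim p, chaosCoeffs_mem_chaosCoeffSpace _ hflim⟩
  have hcoeffs := tendsto_of_ae_tendsto_chaosSum (hXindep.precomp Fin.val_injective)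
    (fun j => hXmeas j) (fun j => hXint j) (fun j => hXmean j) (fun j => hXnondeg j)
    (x := x) (y := y) (l := atTop) (by
      filter_upwards [ae_all_iff.2 hF, hFlim, hconv] with ω hFω hFlimω hconvω
      have hxω : ∀ n, chaosSum P (fun j : Fin d => X j) ω (x n) = F n ω := fun n =>
        (chaosSum_chaosCoeffs q d X _ _ ω).trans (hFω n).symm
      have hyω : chaosSum P (fun j : Fin d => X j) ω y = Flim ω :=
        (chaosSum_chaosCoeffs q d X _ _ ω).trans hFlimω.symm
      simpa only [hxω, hyω] using hconvω)
  refine ⟨?_, fun p hp => ae_of_all _ fun ω => ?_⟩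
  · simpa [x, y, chaosCoeffs] using hcoeffs (LinearMap.proj (fun k => k.elim0) ∘ₗ
      LinearMap.proj (⟨0, Finset.mem_insert_self 0 _⟩ : P) ∘ₗ (chaosCoeffSpace P _).subtype)
  · refine tendsto_finsetSum _ fun i _ => Tendsto.mul_const _ ?_
    have hp0 : p ≠ 0 := by rw [Finset.mem_Icc] at hp; omega
    simpa [x, y, chaosCoeffs, hp0] using hcoeffs (LinearMap.proj i ∘ₗ
      LinearMap.proj (⟨p, Finset.mem_insert_of_mem hp⟩ : P) ∘ₗ (chaosCoeffSpace P _).subtype)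

/-- **Theorem (unbounded case).** Let `X` be a sequence of independent integrable centered
non-deterministic random variables, and let the kernels `f_{p,n}` all be supported in
`{0, …, d-1}^p` for a fixed `d > q`. If `Fₙ = E[Fₙ] + ∑_{p=1}^q Q_p(f_{p,n}; X)` converges
a.s. to `F = E[F] + ∑_{p=1}^q Q_p(f_p; X)`, then `E[Fₙ] → E[F]` and each chaotic component
`Q_p(f_{p,n}; X)` converges a.s. to `Q_p(f_p; X)`. -/
theorem stmt1 {Ω : Type*} [MeasurableSpace Ω] (μ : Measure Ω) [IsProbabilityMeasure μ]
    (q : ℕ) (hq : 2 ≤ q)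
    (X : ℕ → Ω → ℝ) (hXmeas : ∀ k, Measurable (X k))
    (hXindep : iIndepFun X μ)
    (hXint : ∀ k, Integrable (X k) μ)
    (hXmean : ∀ k, ∫ ω, X k ω ∂μ = 0)
    (hXnondeg : ∀ k, ¬ ∃ c : ℝ, X k =ᵐ[μ] fun _ => c)
    (d : ℕ) (hd : q < d)
    (f : ℕ → (p : ℕ) → (Fin p → ℕ) → ℝ)
    (flim : (p : ℕ) → (Fin p → ℕ) → ℝ)
    (hf : ∀ n, ∀ p ∈ Finset.Icc 1 q, IsKernel (f n p))
    (hflim : ∀ p ∈ Finset.Icc 1 q, IsKernel (flim p))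
    (hfsupp : ∀ n, ∀ p ∈ Finset.Icc 1 q, ∀ i : Fin p → ℕ, (∃ k, d ≤ i k) → f n p i = 0)
    (hflimsupp : ∀ p ∈ Finset.Icc 1 q, ∀ i : Fin p → ℕ, (∃ k, d ≤ i k) → flim p i = 0)
    (F : ℕ → Ω → ℝ) (Flim : Ω → ℝ)
    (hFint : ∀ n, Integrable (F n) μ) (hFlimint : Integrable Flim μ)
    (hF : ∀ n, ∀ᵐ ω ∂μ,
      F n ω = (∫ ω', F n ω' ∂μ) + ∑ p ∈ Finset.Icc 1 q, homSum p d (f n p) X ω)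
    (hFlim : ∀ᵐ ω ∂μ,
      Flim ω = (∫ ω', Flim ω' ∂μ) + ∑ p ∈ Finset.Icc 1 q, homSum p d (flim p) X ω)
    (hconv : ∀ᵐ ω ∂μ, Tendsto (fun n => F n ω) atTop (nhds (Flim ω))) :
    Tendsto (fun n => ∫ ω, F n ω ∂μ) atTop (nhds (∫ ω, Flim ω ∂μ)) ∧
    ∀ p ∈ Finset.Icc 1 q, ∀ᵐ ω ∂μ,
      Tendsto (fun n => homSum p d (f n p) X ω) atTop (nhds (homSum p d (flim p) X ω)) :=
  stmt1_general μ q X hXmeas hXindep hXint hXmean hXnondeg d f flim hf hflim F Flim hF hFlim hconv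
end

section
/- Let H_n denote the n-th probabilists' Hermite polynomial, defined by H_n(x) = (−1)^n exp(x²/2) (d^n/dx^n) exp(−x²/2). Then for every n ≥ 0, every a, b ∈ ℝ with a² + b² = 1, and every x, y ∈ ℝ: H_n(a x + b y) = Σ_{k=0}^n C(n,k) a^k b^{n−k} H_k(x) H_{n−k}(y), where C(n,k) is the binomial coefficient. -/
open Polynomial Finset

noncomputable def Ha (n : ℕ) (t : ℝ) : ℝ := Polynomial.aeval t (Polynomial.hermite n)

lemma Dh (m : ℕ) : derivative (hermite (m+1)) = ((m : Polynomial ℤ) + 1) * hermite m := by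
  induction m with
  | zero => simp [hermite_one, hermite_zero]
  | succ m ih =>
    rw [hermite_succ (m+1), derivative_sub, derivative_mul, derivative_X, one_mul, ih,
      derivative_mul]
    have hds : derivative ((m : Polynomial ℤ) + 1) = 0 := by simp
    rw [hds, zero_mul, zero_add]
    have h1 : hermite (m+1) = X * hermite m - derivative (hermite m) := hermite_succ m
    rw [h1]
    push_cast
    ring

lemma Ha_succ_succ (m : ℕ) (z : ℝ) :
    Ha (m+2) z = z * Ha (m+1) z - (m+1 : ℝ) * Ha m z := by
  unfold Ha
  rw [show m+2 = (m+1)+1 from rfl, hermite_succ (m+1), map_sub, map_mul, aeval_X, Dh m,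
    map_mul]
  simp only [map_add, map_one, map_natCast]

lemma mul_Ha (k : ℕ) (z : ℝ) : z * Ha k z = Ha (k+1) z + (k : ℝ) * Ha (k-1) z := by
  cases k with
  | zero => simp [Ha, hermite_zero, hermite_one]
  | succ m =>
    rw [show m+1+1 = m+2 from rfl, Ha_succ_succ, show m+1-1 = m from rfl]
    push_cast
    ring

/-- **Addition formula for Hermite polynomials.** For the probabilists' Hermite polynomials
`Hₙ` and any `a, b ∈ ℝ` with `a² + b² = 1`,
`Hₙ(ax + by) = ∑_{k=0}^n C(n,k) aᵏ bⁿ⁻ᵏ H_k(x) H_{n-k}(y)`. -/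
theorem stmt6 (n : ℕ) (a b x y : ℝ) (hab : a ^ 2 + b ^ 2 = 1) :
    Polynomial.aeval (a * x + b * y) (Polynomial.hermite n) =
      ∑ k ∈ Finset.range (n + 1),
        (n.choose k : ℝ) * a ^ k * b ^ (n - k) *
          Polynomial.aeval x (Polynomial.hermite k) *
          Polynomial.aeval y (Polynomial.hermite (n - k)) := by
  suffices h : ∀ m : ℕ, (Ha m (a*x+b*y) =
      ∑ k ∈ Finset.range (m + 1), (m.choose k : ℝ) * a ^ k * b ^ (m - k) * Ha k x * Ha (m-k) y)
      ∧ (Ha (m+1) (a*x+b*y) =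
      ∑ k ∈ Finset.range (m + 2), ((m+1).choose k : ℝ) * a ^ k * b ^ (m+1 - k) * Ha k x * Ha (m+1-k) y) by
    exact (h n).1
  intro m
  induction m with
  | zero =>
    constructor
    · simp [Ha, hermite_zero]
    · simp [Ha, hermite_zero, hermite_one, Finset.sum_range_succ]
      ring
  | succ m ih =>
    refine ⟨ih.2, ?_⟩
    set f : ℕ → ℕ → ℝ := fun p k => (p.choose k : ℝ) * a ^ k * b ^ (p - k) * Ha k x * Ha (p-k) y with hf
    have key : (a*x+b*y) * (∑ k ∈ range (m+2), f (m+1) k)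
        = (∑ k ∈ range (m+3), f (m+2) k) + (m+1 : ℝ) * ∑ k ∈ range (m+1), f m k := by
      set A : ℕ → ℝ := fun k => ((m+1).choose k : ℝ) * a^(k+1) * b^(m+1-k) * Ha (k+1) x * Ha (m+1-k) y with hA
      set B : ℕ → ℝ := fun k => ((m+1).choose k : ℝ) * (k:ℝ) * a^(k+1) * b^(m+1-k) * Ha (k-1) x * Ha (m+1-k) y with hB
      set C : ℕ → ℝ := fun k => ((m+1).choose k : ℝ) * a^k * b^(m+2-k) * Ha k x * Ha (m+2-k) y with hC
      set D : ℕ → ℝ := fun k => ((m+1).choose k : ℝ) * ((m+1-k : ℕ):ℝ) * a^k * b^(m+2-k) * Ha k x * Ha (m-k) y with hD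
      have hpoint : ∀ k ∈ range (m+2), (a*x+b*y) * f (m+1) k = A k + B k + C k + D k := by
        intro k hk
        rw [mem_range] at hk
        have e1 : m+1-k+1 = m+2-k := by omega
        have e2 : m+1-k-1 = m-k := by omega
        have e3 : b^(m+2-k) = b * b^(m+1-k) := by
          rw [show m+2-k = (m+1-k)+1 by omega]; ring
        have hx := mul_Ha k x
        have hy := mul_Ha (m+1-k) y
        rw [e1, e2] at hy
        simp only [hf, hA, hB, hC, hD, e3]
        calc (a*x+b*y) * (((m+1).choose k : ℝ) * a^k * b^(m+1-k) * Ha k x * Ha (m+1-k) y)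
            = ((m+1).choose k : ℝ) * a^(k+1) * b^(m+1-k) * (x * Ha k x) * Ha (m+1-k) y
              + ((m+1).choose k : ℝ) * a^k * (b * b^(m+1-k)) * Ha k x * (y * Ha (m+1-k) y) := by
              ring
          _ = _ := by rw [hx, hy]; ring
      have hAC : (∑ k ∈ range (m+2), A k) + (∑ k ∈ range (m+2), C k)
          = ∑ k ∈ range (m+3), f (m+2) k := by
        have h1 : ∑ k ∈ range (m+3), f (m+2) k
            = (∑ j ∈ range (m+2), f (m+2) (j+1)) + f (m+2) 0 := sum_range_succ' _ _
        have h2 : ∀ j ∈ range (m+2), f (m+2) (j+1) = A j + C (j+1) := by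
          intro j hj
          rw [mem_range] at hj
          simp only [hf, hA, hC]
          have e : m+2-(j+1) = m+1-j := by omega
          rw [e, Nat.choose_succ_succ (m+1) j]
          push_cast
          ring
        have h3 : ∑ k ∈ range (m+3), C k = (∑ j ∈ range (m+2), C (j+1)) + C 0 :=
          sum_range_succ' _ _
        have h4 : ∑ k ∈ range (m+3), C k = (∑ k ∈ range (m+2), C k) + C (m+2) :=
          sum_range_succ _ _
        have h5 : C (m+2) = 0 := by
          have : (m+1).choose (m+2) = 0 := Nat.choose_eq_zero_of_lt (by omega)
          simp [hC, this]
        have h6 : f (m+2) 0 = C 0 := by simp [hf, hC]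
        rw [h1, sum_congr rfl h2, sum_add_distrib, h6]
        rw [h4, h5, add_zero] at h3
        linarith [h3]
      have hBD : (∑ k ∈ range (m+2), B k) + (∑ k ∈ range (m+2), D k)
          = (m+1 : ℝ) * ∑ k ∈ range (m+1), f m k := by
        have hB0 : B 0 = 0 := by simp [hB]
        have hD2 : D (m+1) = 0 := by simp [hD]
        have hB1 : ∀ j ∈ range (m+1), B (j+1) = (m+1:ℝ) * (a^2 * f m j) := by
          intro j hj
          rw [mem_range] at hj
          simp only [hB, hf]
          have e : m+1-(j+1) = m-j := by omega
          have e4 : (j+1)-1 = j := by omega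
          have hc : (m+1).choose (j+1) * (j+1) = (m+1) * m.choose j := by
            rw [← Nat.add_one_mul_choose_eq]
          have hc' := congrArg (Nat.cast : ℕ → ℝ) hc
          push_cast at hc'
          rw [e, e4]
          push_cast
          linear_combination a ^ (j + 2) * b ^ (m - j) * Ha j x * Ha (m - j) y * hc'
        have hD1 : ∀ k ∈ range (m+1), D k = (m+1:ℝ) * (b^2 * f m k) := by
          intro k hk
          rw [mem_range] at hk
          simp only [hD, hf]
          have e : b^(m+2-k) = b^2 * b^(m-k) := by
            rw [show m+2-k = (m-k)+2 by omega]; ring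
          have hc : (m+1).choose k * (m+1-k) = (m+1) * m.choose k := by
            rw [← Nat.choose_succ_right_eq, ← Nat.add_one_mul_choose_eq]
          have hc' := congrArg (Nat.cast : ℕ → ℝ) hc
          push_cast [Nat.cast_sub (by omega : k ≤ m+1)] at hc'
          rw [e]
          push_cast [Nat.cast_sub (by omega : k ≤ m+1)]
          linear_combination a ^ k * (b^2 * b ^ (m - k)) * Ha k x * Ha (m - k) y * hc'
        rw [sum_range_succ' B (m+1), sum_range_succ D (m+1), hB0, hD2, add_zero, add_zero,
          sum_congr rfl hB1, sum_congr rfl hD1, ← sum_add_distrib]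
        calc ∑ j ∈ range (m+1), ((m+1:ℝ) * (a^2 * f m j) + (m+1:ℝ) * (b^2 * f m j))
            = ∑ j ∈ range (m+1), (m+1:ℝ) * f m j :=
              sum_congr rfl (fun k _ => by linear_combination (m+1:ℝ) * f m k * hab)
          _ = (m+1 : ℝ) * ∑ k ∈ range (m+1), f m k := (mul_sum _ _ _).symm
      calc (a*x+b*y) * (∑ k ∈ range (m+2), f (m+1) k)
          = ∑ k ∈ range (m+2), (A k + B k + C k + D k) := by
            rw [mul_sum]; exact sum_congr rfl hpoint
        _ = ((∑ k ∈ range (m+2), A k) + (∑ k ∈ range (m+2), C k))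
            + ((∑ k ∈ range (m+2), B k) + (∑ k ∈ range (m+2), D k)) := by
            simp only [sum_add_distrib]; ring
        _ = (∑ k ∈ range (m+3), f (m+2) k) + (m+1 : ℝ) * ∑ k ∈ range (m+1), f m k := by
            rw [hAC, hBD]
    have lhs : Ha (m+2) (a*x+b*y)
        = (a*x+b*y) * Ha (m+1) (a*x+b*y) - (m+1 : ℝ) * Ha m (a*x+b*y) := Ha_succ_succ m _
    rw [lhs, ih.1, ih.2]
    rw [show (m+1)+1 = m+2 from rfl, show (m+1)+2 = m+3 from rfl] at *
    rw [key]
    ring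
end

section
/- Let H_n denote the n-th probabilists' Hermite polynomial and let Z be a standard Gaussian random variable (mean 0, variance 1). Then for every n ≥ 0, every a, b ∈ ℝ with a² + b² = 1, and every x ∈ ℝ: E[H_n(a x + b Z)] = a^n H_n(x). -/
/-!
Gaussian integration by parts (Stein's identity) gives `E[Z p(Z)] = E[p'(Z)]` for polynomials `p`.
With `L = a x + b Z`, the recurrence `H_{k+2} = X H_{k+1} - (k+1) H_k` and `H_{k+1}' = (k+1) H_k`
then yield `E[H_{k+2}(L)] = a x E[H_{k+1}(L)] + (b² - 1)(k+1) E[H_k(L)]`, and `b² - 1 = -a²`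
closes a two-step induction on `n`.
-/

open MeasureTheory ProbabilityTheory Polynomial
open scoped NNReal

namespace Polynomial

theorem derivative_hermite_succ (n : ℕ) :
    derivative (hermite (n + 1)) = ((n + 1 : ℕ) : ℤ[X]) * hermite n := by
  induction n with
  | zero => simp
  | succ n ih =>
    rw [hermite_succ (n + 1), derivative_sub, derivative_mul, derivative_X, ih, derivative_mul,
      hermite_succ n]
    simp only [derivative_natCast]
    push_cast
    ring

theorem hermite_succ_succ (n : ℕ) :
    hermite (n + 2) = X * hermite (n + 1) - ((n + 1 : ℕ) : ℤ[X]) * hermite n := by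
  rw [hermite_succ (n + 1), derivative_hermite_succ]

end Polynomial

namespace ProbabilityTheory

variable {m : ℝ} {v : ℝ≥0}

lemma integrable_eval_gaussianReal (p : ℝ[X]) :
    Integrable (fun z ↦ p.eval z) (gaussianReal m v) := by
  induction p using Polynomial.induction_on' with
  | add p q hp hq => simp only [eval_add]; exact hp.add hq
  | monomial k c =>
    have hpow : Integrable (fun z : ℝ ↦ z ^ k) (gaussianReal m v) :=
      (integrable_norm_iff (by fun_prop)).1 <| by
        simpa [norm_pow] using (memLp_id_gaussianReal (μ := m) (v := v) k).integrable_norm_pow'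
    simpa using hpow.const_mul c

lemma integrable_gaussianReal_iff {f : ℝ → ℝ} (hv : v ≠ 0) :
    Integrable f (gaussianReal m v) ↔ Integrable (fun x ↦ gaussianPDFReal m v x * f x) := by
  rw [gaussianReal_of_var_ne_zero _ hv, integrable_withDensity_iff_integrable_smul'
    (measurable_gaussianPDF m v) (ae_of_all _ fun _ ↦ gaussianPDF_lt_top)]
  simp [gaussianPDF, gaussianPDFReal_nonneg]

lemma hasDerivAt_gaussianPDFReal (x : ℝ) :
    HasDerivAt (gaussianPDFReal m v) (-((x - m) / v) * gaussianPDFReal m v x) x := by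
  rcases eq_or_ne v 0 with rfl | hv
  · simp
  have hexponent : HasDerivAt (fun y ↦ -(y - m) ^ 2 / (2 * v)) (-((x - m) / v)) x :=
    ((((hasDerivAt_id' x).sub_const m).pow 2).neg.div_const (2 * (v : ℝ))).congr_deriv
      (by field_simp; ring)
  have := hexponent.exp.const_mul (√(2 * Real.pi * v))⁻¹
  rw [gaussianPDFReal_def]
  exact this.congr_deriv (by ring)

noncomputable def gaussianExpectation (m : ℝ) (v : ℝ≥0) : ℝ[X] →ₗ[ℝ] ℝ where
  toFun p := ∫ z, p.eval z ∂gaussianReal m v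
  map_add' p q := by
    simp only [eval_add]
    exact integral_add (integrable_eval_gaussianReal p) (integrable_eval_gaussianReal q)
  map_smul' c p := by
    simp only [eval_smul, smul_eq_mul, RingHom.id_apply]
    exact integral_const_mul c _

lemma gaussianExpectation_apply (p : ℝ[X]) :
    gaussianExpectation m v p = ∫ z, p.eval z ∂gaussianReal m v := rfl

theorem gaussianExpectation_X_sub_C_mul (p : ℝ[X]) :
    gaussianExpectation m v ((X - C m) * p) = v * gaussianExpectation m v (derivative p) := by
  rcases eq_or_ne v 0 with rfl | hv
  · simp [gaussianExpectation_apply]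
  have hq : gaussianExpectation m v (derivative p - C (v : ℝ)⁻¹ * ((X - C m) * p)) = 0 := by
    rw [gaussianExpectation_apply, integral_gaussianReal_eq_integral_smul hv]
    refine integral_eq_zero_of_hasDerivAt_of_integrable (fun z ↦ ?_)
      ((integrable_gaussianReal_iff hv).1 (integrable_eval_gaussianReal _))
      ((integrable_gaussianReal_iff (m := m) hv).1 (integrable_eval_gaussianReal p))
    refine ((hasDerivAt_gaussianPDFReal z).mul (p.hasDerivAt z)).congr_deriv ?_
    simp only [eval_sub, eval_mul, eval_C, eval_X, smul_eq_mul]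
    ring
  rw [map_sub, ← smul_eq_C_mul, map_smul, smul_eq_mul, sub_eq_zero] at hq
  rw [hq, mul_inv_cancel_left₀ (NNReal.coe_ne_zero.2 hv)]

end ProbabilityTheory

theorem gaussianExpectation_X_mul_hermite_succ_comp (c b : ℝ) (k : ℕ) :
    gaussianExpectation 0 1
        (X * ((hermite (k + 1)).map (algebraMap ℤ ℝ)).comp (C c + C b * X)) =
      b * (k + 1) *
        gaussianExpectation 0 1 (((hermite k).map (algebraMap ℤ ℝ)).comp (C c + C b * X)) := by
  have hL : derivative (C c + C b * X) = C b := by simp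
  have hderiv : derivative (((hermite (k + 1)).map (algebraMap ℤ ℝ)).comp (C c + C b * X)) =
      (b * (k + 1)) • ((hermite k).map (algebraMap ℤ ℝ)).comp (C c + C b * X) := by
    simp only [derivative_comp, hL, derivative_map, derivative_hermite_succ, Polynomial.map_mul,
      Polynomial.map_natCast, mul_comp, natCast_comp, smul_eq_C_mul, C_mul, C_add, C_1,
      map_natCast]
    push_cast
    ring
  have := gaussianExpectation_X_sub_C_mul (m := 0) (v := 1)
    (((hermite (k + 1)).map (algebraMap ℤ ℝ)).comp (C c + C b * X))
  rw [map_zero, sub_zero, NNReal.coe_one, one_mul] at this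
  rw [this, hderiv, map_smul, smul_eq_mul]

theorem gaussianExpectation_hermite_comp (a b x : ℝ) (hab : a ^ 2 + b ^ 2 = 1) (n : ℕ) :
    gaussianExpectation 0 1
        (((hermite n).map (algebraMap ℤ ℝ)).comp (C (a * x) + C b * X)) =
      a ^ n * aeval x (hermite n) := by
  set H : ℕ → ℝ[X] := fun k ↦ ((hermite k).map (algebraMap ℤ ℝ)).comp (C (a * x) + C b * X)
    with hH
  change gaussianExpectation 0 1 (H n) = _
  induction n using Nat.twoStepInduction with
  | zero => simp [H, gaussianExpectation_apply]
  | one =>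
    have hX : gaussianExpectation 0 1 X = 0 := by
      simpa using gaussianExpectation_X_sub_C_mul (m := 0) (v := 1) 1
    have hH1 : H 1 = (a * x) • 1 + b • X := by simp [H, smul_eq_C_mul]
    rw [hH1, map_add, map_smul, map_smul, hX]
    simp [gaussianExpectation_apply]
  | more k ih0 ih1 =>
    have hrec :
        H (k + 2) = (a * x) • H (k + 1) + b • (X * H (k + 1)) - (k + 1 : ℝ) • H k := by
      simp only [hH, hermite_succ_succ, Polynomial.map_sub, Polynomial.map_mul, map_X,
        Polynomial.map_natCast, sub_comp, mul_comp, X_comp, natCast_comp, smul_eq_C_mul,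
        C_add, C_1, map_natCast]
      push_cast
      ring
    rw [hrec, map_sub, map_add, map_smul, map_smul, map_smul, smul_eq_mul, smul_eq_mul,
      smul_eq_mul, gaussianExpectation_X_mul_hermite_succ_comp, ih0, ih1, hermite_succ_succ]
    simp only [map_sub, map_mul, aeval_X, map_natCast]
    push_cast
    linear_combination ((k : ℝ) + 1) * a ^ k * aeval x (hermite k) * hab

theorem stmt7_general {Ω : Type*} [MeasurableSpace Ω] (μ : Measure Ω)
    (Z : Ω → ℝ) (hZmeas : Measurable Z)
    (hZlaw : μ.map Z = gaussianReal 0 1)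
    (n : ℕ) (a b x : ℝ) (hab : a ^ 2 + b ^ 2 = 1) :
    ∫ ω, (Polynomial.aeval (a * x + b * Z ω) (Polynomial.hermite n) : ℝ) ∂μ =
      a ^ n * Polynomial.aeval x (Polynomial.hermite n) := by
  set p : ℝ[X] := ((hermite n).map (algebraMap ℤ ℝ)).comp (C (a * x) + C b * X)
  have hp (z : ℝ) : aeval (a * x + b * z) (hermite n) = p.eval z := by
    simp only [p, eval_comp, eval_add, eval_mul, eval_C, eval_X, eval_map_algebraMap]
  calc ∫ ω, aeval (a * x + b * Z ω) (hermite n) ∂μ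
      = ∫ z, p.eval z ∂(μ.map Z) := by
        rw [integral_map hZmeas.aemeasurable p.continuous.aestronglyMeasurable]
        simp only [hp]
    _ = a ^ n * aeval x (hermite n) := by
        rw [hZlaw, ← gaussianExpectation_apply, gaussianExpectation_hermite_comp a b x hab]

/-- **Mehler-type identity for Hermite polynomials.** If `Z` is a standard Gaussian random
variable and `a² + b² = 1`, then `E[Hₙ(ax + bZ)] = aⁿ Hₙ(x)`, where `Hₙ` is the `n`-th
probabilists' Hermite polynomial. -/
theorem stmt7 {Ω : Type*} [MeasurableSpace Ω] (μ : Measure Ω) [IsProbabilityMeasure μ]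
    (Z : Ω → ℝ) (hZmeas : Measurable Z)
    (hZlaw : μ.map Z = gaussianReal 0 1)
    (n : ℕ) (a b x : ℝ) (hab : a ^ 2 + b ^ 2 = 1) :
    ∫ ω, (Polynomial.aeval (a * x + b * Z ω) (Polynomial.hermite n) : ℝ) ∂μ =
      a ^ n * Polynomial.aeval x (Polynomial.hermite n) :=
  stmt7_general μ Z hZmeas hZlaw n a b x hab
end

section
/- Let X = (X_i)_{i∈ℕ} be a sequence of independent integrable real random variables with E[X_i] = 0 for every i, let X̂ = (X̂_i)_{i∈ℕ} be an independent copy of X, and let Θ = (θ_i)_{i∈ℕ} be i.i.d. standard exponential random variables, with X, X̂, Θ mutually independent. For t > 0 define X^t_i = X_i·1{θ_i ≥ t} + X̂_i·1{θ_i < t}. Then for every integer p ≥ 1 and every finitely supported kernel f of order p, almost surely E[ Q_p(f; X^t) | σ(X) ] = e^{−pt} · Q_p(f; X). -/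
/-!
Write `X^t_i = X_i a_i + b_i` with `a_i = 1{θ_i ≥ t}` and `b_i = X̂_i 1{θ_i < t}`. For distinct
indices `i_1, …, i_p`, expanding `∏ₖ X^t_{i_k}` gives a sum over the sets `T` of kept coordinates
of `(∏_{k ∈ T} X_{i_k}) W_T`, where `W_T = ∏_{k ∈ T} a_{i_k} ∏_{k ∉ T} b_{i_k}` is a function of
`(X̂, Θ)` alone, hence independent of `σ(X)`. Conditioning therefore replaces `W_T` by its mean,
which factorizes over the independent pairs `(X̂_i, θ_i)`: each `a` contributes `P(θ ≥ t) = e^{-t}`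
and each `b` contributes `E[X̂_i] P(θ_i < t) = 0`. Only `T = {1, …, p}` survives, and the kernel
vanishing on diagonals makes the distinct-index case sufficient by linearity.
-/

open MeasureTheory ProbabilityTheory Filter
open scoped ENNReal NNReal

open Function

lemma Fintype.prod_mul_add_eq_sum {κ R : Type*} [Fintype κ] [DecidableEq κ] [CommSemiring R]
    (x a b : κ → R) :
    ∏ k, (x k * a k + b k) = ∑ T : Finset κ, (∏ k ∈ T, x k) * ∏ k, if k ∈ T then a k else b k := by
  rw [Fintype.prod_add]
  refine Finset.sum_congr rfl fun T _ => ?_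
  rw [Finset.prod_mul_distrib, Finset.prod_ite, mul_assoc]
  simp [Finset.compl_eq_univ_sdiff, Finset.filter_not]

namespace ProbabilityTheory

variable {Ω ι κ : Type*} {mΩ : MeasurableSpace Ω} {μ : Measure Ω}

lemma iIndep_of_indep_biSup [IsProbabilityMeasure μ] {m : ι → MeasurableSpace Ω}
    (h : ∀ (s : Finset ι) (k : ι), k ∉ s → Indep (m k) (⨆ l ∈ s, m l) μ) : iIndep m μ := by
  classical
  refine (iIndep_iff m μ).2 fun s => ?_
  induction s using Finset.induction_on with
  | empty => simp
  | @insert k s hk ih =>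
    intro f hf
    have hs : MeasurableSet[⨆ l ∈ s, m l] (⋂ l ∈ s, f l) :=
      .biInter s.countable_toSet fun l hl =>
        le_biSup m hl _ (hf l (Finset.mem_insert_of_mem hl))
    rw [Finset.set_biInter_insert, Finset.prod_insert hk,
      (Indep_iff _ _ μ).1 (h s k hk) _ _ (hf k (Finset.mem_insert_self k s)) hs,
      ih fun l hl => hf l (Finset.mem_insert_of_mem hl)]

lemma iIndep.biSup_of_pairwise_disjoint {m : κ → MeasurableSpace Ω} (h_le : ∀ a, m a ≤ mΩ)
    (h : iIndep m μ) {B : ι → Set κ} (hB : Pairwise (Disjoint on B)) :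
    iIndep (fun i => ⨆ a ∈ B i, m a) μ := by
  have := h.isProbabilityMeasure
  refine iIndep_of_indep_biSup fun s k hk => ?_
  have hdisj : Disjoint (B k) (⋃ l ∈ s, B l) :=
    Set.disjoint_iUnion₂_right.2 fun l hl => hB (ne_of_mem_of_not_mem hl hk).symm
  simpa only [iSup_iUnion] using indep_iSup_of_disjoint h_le h hdisj

lemma iIndepFun.prodMk_of_sumElim {β : Type*} [MeasurableSpace β]
    {f g : ι → Ω → β} (hf : ∀ i, Measurable (f i)) (hg : ∀ i, Measurable (g i))
    (h : iIndepFun (Sum.elim f g) μ) :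
    iIndepFun (fun i ω => (f i ω, g i ω)) μ := by
  have h_le : ∀ a, MeasurableSpace.comap (Sum.elim f g a) inferInstance ≤ mΩ :=
    Sum.forall.2 ⟨fun i => (hf i).comap_le, fun i => (hg i).comap_le⟩
  have hB : Pairwise (Disjoint on fun i : ι => ({Sum.inl i, Sum.inr i} : Set (ι ⊕ ι))) := by
    intro i j hij
    simp [onFun, hij.symm]
  have h_comap : ∀ i, MeasurableSpace.comap (fun ω => (f i ω, g i ω)) inferInstance =
      ⨆ a ∈ ({Sum.inl i, Sum.inr i} : Set (ι ⊕ ι)),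
        MeasurableSpace.comap (Sum.elim f g a) inferInstance := fun i => by
    rw [iSup_insert, iSup_singleton, Sum.elim_inl, Sum.elim_inr]
    exact MeasurableSpace.comap_prodMk (f i) (g i)
  rw [iIndepFun_iff_iIndep]
  simpa only [h_comap] using h.iIndep.biSup_of_pairwise_disjoint h_le hB

lemma iIndepFun.indep_iSup_comap_sumElim {β : Type*} [MeasurableSpace β]
    {f : ι → Ω → β} {g : κ → Ω → β} (hf : ∀ i, Measurable (f i)) (hg : ∀ i, Measurable (g i))
    (h : iIndepFun (Sum.elim f g) μ) :
    Indep (⨆ i, MeasurableSpace.comap (f i) inferInstance)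
      (⨆ j, MeasurableSpace.comap (g j) inferInstance) μ := by
  have h_le : ∀ a, MeasurableSpace.comap (Sum.elim f g a) inferInstance ≤ mΩ :=
    Sum.forall.2 ⟨fun i => (hf i).comap_le, fun i => (hg i).comap_le⟩
  simpa only [iSup_range, Sum.elim_inl, Sum.elim_inr] using indep_iSup_of_disjoint h_le h.iIndep
    Set.isCompl_range_inl_range_inr.disjoint

lemma iIndepFun.integrable_finsetProd {Y : ι → Ω → ℝ} (h : iIndepFun Y μ)
    (hY : ∀ i, Integrable (Y i) μ) (s : Finset ι) : Integrable (∏ i ∈ s, Y i) μ := by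
  classical
  have := h.isProbabilityMeasure
  induction s using Finset.induction_on with
  | empty => exact integrable_const (1 : ℝ)
  | @insert i s hi ih =>
    rw [Finset.prod_insert hi, mul_comm]
    exact (h.indepFun_finsetProd_of_notMem₀ (fun i => (hY i).aemeasurable) hi).integrable_mul
      ih (hY i)

lemma Indep.indepFun_of_measurable {β γ : Type*} [MeasurableSpace β] [MeasurableSpace γ]
    {m₁ m₂ : MeasurableSpace Ω} (hind : Indep m₁ m₂ μ) {Z : Ω → β} {W : Ω → γ} (hZ : Measurable[m₁] Z) (hW : Measurable[m₂] W) :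
    IndepFun Z W μ :=
  (IndepFun_iff_Indep Z W μ).2 (indep_of_indep_of_le hind hZ.comap_le hW.comap_le)

end ProbabilityTheory

section ConditionalExpectation

variable {Ω ι κ : Type*} {mΩ : MeasurableSpace Ω} {μ : Measure Ω}

lemma measurable_prod_iSup_comap {X : ι → Ω → ℝ} (j : κ → ι) (s : Finset κ) :
    Measurable[⨆ i, MeasurableSpace.comap (X i) inferInstance] fun ω => ∏ k ∈ s, X (j k) ω :=
  Finset.measurable_prod _ fun k _ =>
    .of_comap_le (le_iSup (fun i => MeasurableSpace.comap (X i) _) (j k))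

lemma condExp_mul_ae_eq_mul_integral_of_indep [IsFiniteMeasure μ] {m₁ m₂ : MeasurableSpace Ω}
    (hm₁ : m₁ ≤ mΩ) (hm₂ : m₂ ≤ mΩ) (hind : Indep m₂ m₁ μ) {Z W : Ω → ℝ}
    (hZm : StronglyMeasurable[m₁] Z) (hWm : StronglyMeasurable[m₂] W)
    (hZW : Integrable (Z * W) μ) (hW : Integrable W μ) :
    μ[Z * W | m₁] =ᵐ[μ] fun ω => Z ω * ∫ ω', W ω' ∂μ := by
  filter_upwards [condExp_mul_of_stronglyMeasurable_left hZm hZW hW,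
    condExp_indep_eq hm₂ hm₁ hWm hind] with ω h1 h2
  rw [h1, Pi.mul_apply, h2]

lemma condExp_sum_smul_ae_eq {m : MeasurableSpace Ω} (s : Finset ι) (c : ι → ℝ)
    {F L : ι → Ω → ℝ} (h : ∀ i ∈ s, c i ≠ 0 → Integrable (F i) μ ∧ μ[F i | m] =ᵐ[μ] L i) :
    μ[∑ i ∈ s, c i • F i | m] =ᵐ[μ] ∑ i ∈ s, c i • L i := by
  have hint : ∀ i ∈ s, Integrable (c i • F i) μ := fun i hi => by
    by_cases hc : c i = 0
    · simp [hc]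
    · exact (h i hi hc).1.smul (c i)
  have hterm : ∀ i ∈ s, μ[c i • F i | m] =ᵐ[μ] c i • L i := fun i hi => by
    by_cases hc : c i = 0
    · simp [hc]
    · filter_upwards [condExp_smul (c i) (F i) m, (h i hi hc).2] with ω h1 h2
      simp [h1, h2]
  filter_upwards [condExp_finsetSum hint m, (s.eventually_all).2 hterm] with ω h1 h2
  simp only [h1, Finset.sum_apply]
  exact Finset.sum_congr rfl h2

end ConditionalExpectation

noncomputable section Resampling

variable {Ω : Type*} {mΩ : MeasurableSpace Ω} {μ : Measure Ω} {X Xhat Θ : ℕ → Ω → ℝ} {t q : ℝ}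
  {κ : Type*} [Fintype κ] [DecidableEq κ] {j : κ → ℕ}

def resample (t : ℝ) (X Xhat Θ : ℕ → Ω → ℝ) (n : ℕ) (ω : Ω) : ℝ :=
  if t ≤ Θ n ω then X n ω else Xhat n ω

def keepWeight (t : ℝ) (z : ℝ × ℝ) : ℝ := if t ≤ z.2 then 1 else 0

def swapWeight (t : ℝ) (z : ℝ × ℝ) : ℝ := if t ≤ z.2 then 0 else z.1

-- `W_T` in the expansion `∏ₖ X^t_{j k} = ∑_T (∏_{k ∈ T} X_{j k}) W_T` (`prod_resample_eq_sum`).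
def termWeight (t : ℝ) (Xhat Θ : ℕ → Ω → ℝ) (j : κ → ℕ) (T : Finset κ) (ω : Ω) : ℝ :=
  ∏ k, if k ∈ T then keepWeight t (Xhat (j k) ω, Θ (j k) ω)
    else swapWeight t (Xhat (j k) ω, Θ (j k) ω)

lemma measurable_keepWeight (t : ℝ) : Measurable (keepWeight t) :=
  .ite (measurableSet_le measurable_const measurable_snd) measurable_const measurable_const

lemma measurable_swapWeight (t : ℝ) : Measurable (swapWeight t) :=
  .ite (measurableSet_le measurable_const measurable_snd) measurable_const measurable_fst

lemma resample_eq_mul_keepWeight_add_swapWeight (n : ℕ) (ω : Ω) :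
    resample t X Xhat Θ n ω =
      X n ω * keepWeight t (Xhat n ω, Θ n ω) + swapWeight t (Xhat n ω, Θ n ω) := by
  by_cases h : t ≤ Θ n ω <;> simp [resample, keepWeight, swapWeight, h]

lemma integral_keepWeight {n : ℕ} (hΘm : Measurable (Θ n)) :
    ∫ ω, keepWeight t (Xhat n ω, Θ n ω) ∂μ = μ.real {ω | t ≤ Θ n ω} := by
  have hA : MeasurableSet {ω | t ≤ Θ n ω} := hΘm measurableSet_Ici
  rw [← integral_indicator_one hA]
  congr with ω

lemma integral_swapWeight {n : ℕ} (hXhatm : Measurable (Xhat n)) (hΘm : Measurable (Θ n))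
    (hind : IndepFun (Xhat n) (Θ n) μ) (hmean : ∫ ω, Xhat n ω ∂μ = 0) :
    ∫ ω, swapWeight t (Xhat n ω, Θ n ω) ∂μ = 0 := by
  have hsplit : ∀ ω, swapWeight t (Xhat n ω, Θ n ω) =
      id (Xhat n ω) * (fun θ => if t ≤ θ then (0 : ℝ) else 1) (Θ n ω) := fun ω => by
    by_cases h : t ≤ Θ n ω <;> simp [swapWeight, h]
  simp_rw [hsplit]
  rw [hind.integral_fun_comp_mul_comp hXhatm.aemeasurable hΘm.aemeasurable
    aestronglyMeasurable_id (Measurable.ite measurableSet_Ici measurable_const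
      measurable_const).aestronglyMeasurable]
  simp [hmean]

lemma integral_termWeight
    (hXhatm : ∀ n, Measurable (Xhat n)) (hΘm : ∀ n, Measurable (Θ n))
    (hind : iIndepFun (Sum.elim Xhat Θ) μ) (hmean : ∀ n, ∫ ω, Xhat n ω ∂μ = 0)
    (hq : ∀ n, μ.real {ω | t ≤ Θ n ω} = q)
    (hj : Injective j) (T : Finset κ) :
    ∫ ω, termWeight t Xhat Θ j T ω ∂μ = ∏ k, if k ∈ T then q else 0 := by
  have hpairs := (hind.prodMk_of_sumElim hXhatm hΘm).precomp hj
  unfold termWeight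
  rw [hpairs.integral_fun_prod_comp (f := fun k z => if k ∈ T then keepWeight t z else swapWeight t z)
    (fun k => ((hXhatm (j k)).prodMk (hΘm (j k))).aemeasurable) fun k => ?_]
  · refine Finset.prod_congr rfl fun k _ => ?_
    split_ifs
    · exact (integral_keepWeight (hΘm (j k))).trans (hq (j k))
    · exact integral_swapWeight (hXhatm (j k)) (hΘm (j k))
        (hind.indepFun Sum.inl_ne_inr) (hmean (j k))
  · split_ifs
    exacts [(measurable_keepWeight t).aestronglyMeasurable,
      (measurable_swapWeight t).aestronglyMeasurable]

lemma norm_keepWeight_le (t : ℝ) (z : ℝ × ℝ) : ‖keepWeight t z‖ ≤ 1 := by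
  unfold keepWeight; split_ifs <;> simp

lemma norm_swapWeight_le (t : ℝ) (z : ℝ × ℝ) : ‖swapWeight t z‖ ≤ ‖z.1‖ := by
  unfold swapWeight; split_ifs <;> simp

lemma integrable_termWeight
    (hXhatm : ∀ n, Measurable (Xhat n)) (hΘm : ∀ n, Measurable (Θ n))
    (hind : iIndepFun (Sum.elim Xhat Θ) μ) (hXhatint : ∀ n, Integrable (Xhat n) μ)
    (hj : Injective j) (T : Finset κ) :
    Integrable (termWeight t Xhat Θ j T) μ := by
  have := hind.isProbabilityMeasure
  have hpairs := (hind.prodMk_of_sumElim hXhatm hΘm).precomp hj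
  have hweights := hpairs.comp (fun k z => if k ∈ T then keepWeight t z else swapWeight t z)
    fun k => by split_ifs; exacts [measurable_keepWeight t, measurable_swapWeight t]
  unfold termWeight
  rw [← Finset.prod_fn]
  refine hweights.integrable_finsetProd (fun k => ?_) Finset.univ
  have hpair : Measurable fun ω => (Xhat (j k) ω, Θ (j k) ω) :=
    (hXhatm (j k)).prodMk (hΘm (j k))
  simp only [comp_def]
  split_ifs
  · exact .of_bound ((measurable_keepWeight t).comp hpair).aestronglyMeasurable 1
      (.of_forall fun ω => norm_keepWeight_le t _)
  · exact (hXhatint (j k)).mono ((measurable_swapWeight t).comp hpair).aestronglyMeasurable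
      (.of_forall fun ω => norm_swapWeight_le t _)

lemma prod_resample_eq_sum (ω : Ω) :
    ∏ k, resample t X Xhat Θ (j k) ω =
      ∑ T : Finset κ, (∏ k ∈ T, X (j k) ω) * termWeight t Xhat Θ j T ω := by
  simp_rw [resample_eq_mul_keepWeight_add_swapWeight, termWeight]
  exact Fintype.prod_mul_add_eq_sum _ _ _

lemma measurable_termWeight (T : Finset κ) :
    Measurable[⨆ b, MeasurableSpace.comap (Sum.elim Xhat Θ b) inferInstance]
      (termWeight t Xhat Θ j T) := by
  refine Finset.measurable_prod _ fun k _ => ?_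
  have hpair : Measurable[⨆ b, MeasurableSpace.comap (Sum.elim Xhat Θ b) inferInstance]
      fun ω => (Xhat (j k) ω, Θ (j k) ω) :=
    .prodMk (.of_comap_le (le_iSup (fun b => MeasurableSpace.comap (Sum.elim Xhat Θ b) _)
      (.inl (j k)))) (.of_comap_le (le_iSup (fun b => MeasurableSpace.comap (Sum.elim Xhat Θ b) _)
      (.inr (j k))))
  split_ifs
  exacts [(measurable_keepWeight t).comp hpair, (measurable_swapWeight t).comp hpair]

lemma integrable_mul_termWeight (hXm : ∀ n, Measurable (X n))
    (hXhatm : ∀ n, Measurable (Xhat n)) (hΘm : ∀ n, Measurable (Θ n))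
    (hXint : ∀ n, Integrable (X n) μ) (hXhatint : ∀ n, Integrable (Xhat n) μ)
    (hIndep : iIndepFun (Sum.elim X (Sum.elim Xhat Θ)) μ) (hj : Injective j) (T : Finset κ) :
    Integrable (fun ω => (∏ k ∈ T, X (j k) ω) * termWeight t Xhat Θ j T ω) μ := by
  have hind : iIndepFun (Sum.elim Xhat Θ) μ := hIndep.precomp (g := Sum.inr) Sum.inr_injective
  have hGH := hIndep.indep_iSup_comap_sumElim hXm (Sum.forall.2 ⟨hXhatm, hΘm⟩)
  have hX : iIndepFun X μ := hIndep.precomp (g := Sum.inl) Sum.inl_injective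
  have hXT : Integrable (∏ k ∈ T, fun ω => X (j k) ω) μ :=
    (hX.precomp hj).integrable_finsetProd (fun k => hXint (j k)) T
  rw [Finset.prod_fn] at hXT
  exact (hGH.indepFun_of_measurable (measurable_prod_iSup_comap j T)
    (measurable_termWeight T)).integrable_mul hXT
    (integrable_termWeight hXhatm hΘm hind hXhatint hj T)

lemma condExp_mul_termWeight (hXm : ∀ n, Measurable (X n))
    (hXhatm : ∀ n, Measurable (Xhat n)) (hΘm : ∀ n, Measurable (Θ n))
    (hXint : ∀ n, Integrable (X n) μ) (hXhatint : ∀ n, Integrable (Xhat n) μ)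
    (hmean : ∀ n, ∫ ω, Xhat n ω ∂μ = 0) (hq : ∀ n, μ.real {ω | t ≤ Θ n ω} = q)
    (hIndep : iIndepFun (Sum.elim X (Sum.elim Xhat Θ)) μ) (hj : Injective j) (T : Finset κ) :
    μ[fun ω => (∏ k ∈ T, X (j k) ω) * termWeight t Xhat Θ j T ω |
        ⨆ n, MeasurableSpace.comap (X n) inferInstance]
      =ᵐ[μ] fun ω => (∏ k ∈ T, X (j k) ω) * ∏ k, if k ∈ T then q else 0 := by
  have := hIndep.isProbabilityMeasure
  have hind : iIndepFun (Sum.elim Xhat Θ) μ := hIndep.precomp (g := Sum.inr) Sum.inr_injective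
  have hGH := hIndep.indep_iSup_comap_sumElim hXm (Sum.forall.2 ⟨hXhatm, hΘm⟩)
  rw [← integral_termWeight hXhatm hΘm hind hmean hq hj T]
  exact condExp_mul_ae_eq_mul_integral_of_indep (iSup_le fun n => (hXm n).comap_le)
    (iSup_le (Sum.forall.2 ⟨fun n => (hXhatm n).comap_le, fun n => (hΘm n).comap_le⟩)) hGH.symm
    (measurable_prod_iSup_comap j T).stronglyMeasurable
    (measurable_termWeight T).stronglyMeasurable
    (integrable_mul_termWeight hXm hXhatm hΘm hXint hXhatint hIndep hj T)
    (integrable_termWeight hXhatm hΘm hind hXhatint hj T)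

lemma integrable_prod_resample (hXm : ∀ n, Measurable (X n))
    (hXhatm : ∀ n, Measurable (Xhat n)) (hΘm : ∀ n, Measurable (Θ n))
    (hXint : ∀ n, Integrable (X n) μ) (hXhatint : ∀ n, Integrable (Xhat n) μ)
    (hIndep : iIndepFun (Sum.elim X (Sum.elim Xhat Θ)) μ) (hj : Injective j) :
    Integrable (fun ω => ∏ k, resample t X Xhat Θ (j k) ω) μ := by
  simp_rw [prod_resample_eq_sum]
  exact integrable_finsetSum _ fun T _ =>
    integrable_mul_termWeight hXm hXhatm hΘm hXint hXhatint hIndep hj T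

lemma condExp_prod_resample (hXm : ∀ n, Measurable (X n))
    (hXhatm : ∀ n, Measurable (Xhat n)) (hΘm : ∀ n, Measurable (Θ n))
    (hXint : ∀ n, Integrable (X n) μ) (hXhatint : ∀ n, Integrable (Xhat n) μ)
    (hmean : ∀ n, ∫ ω, Xhat n ω ∂μ = 0) (hq : ∀ n, μ.real {ω | t ≤ Θ n ω} = q)
    (hIndep : iIndepFun (Sum.elim X (Sum.elim Xhat Θ)) μ) (hj : Injective j) :
    μ[fun ω => ∏ k, resample t X Xhat Θ (j k) ω | ⨆ n, MeasurableSpace.comap (X n) inferInstance]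
      =ᵐ[μ] fun ω => q ^ Fintype.card κ * ∏ k, X (j k) ω := by
  have hsum : (fun ω => ∏ k, resample t X Xhat Θ (j k) ω) =
      ∑ T : Finset κ, fun ω => (∏ k ∈ T, X (j k) ω) * termWeight t Xhat Θ j T ω := by
    ext ω
    rw [Finset.sum_apply, prod_resample_eq_sum]
  rw [hsum]
  filter_upwards [condExp_finsetSum (fun T _ =>
      integrable_mul_termWeight hXm hXhatm hΘm hXint hXhatint hIndep hj T) _,
    ae_all_iff.2 fun T =>
      condExp_mul_termWeight hXm hXhatm hΘm hXint hXhatint hmean hq hIndep hj T] with ω hlin hT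
  rw [hlin, Finset.sum_apply]
  simp_rw [hT]
  calc ∑ T : Finset κ, (∏ k ∈ T, X (j k) ω) * ∏ k, (if k ∈ T then q else 0)
      = ∏ k, (X (j k) ω * q + 0) := (Fintype.prod_mul_add_eq_sum _ _ _).symm
    _ = q ^ Fintype.card κ * ∏ k, X (j k) ω := by
      simp [Finset.prod_mul_distrib, mul_comm]

lemma homSum_eq_sum_smul {p d : ℕ} (f : (Fin p → ℕ) → ℝ) (Y : ℕ → Ω → ℝ) :
    homSum p d f Y = ∑ i : Fin p → Fin d, f (fun k => i k) • fun ω => ∏ k, Y (i k) ω := by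
  ext ω
  simp [homSum, Finset.sum_apply]

end Resampling

theorem stmt8_general {Ω : Type*} [MeasurableSpace Ω] (μ : Measure Ω)
    (X Xhat Θ : ℕ → Ω → ℝ)
    (hXmeas : ∀ i, Measurable (X i)) (hXhatmeas : ∀ i, Measurable (Xhat i))
    (hΘmeas : ∀ i, Measurable (Θ i))
    (hXint : ∀ i, Integrable (X i) μ) (hXmean : ∀ i, ∫ ω, X i ω ∂μ = 0)
    (hIndep : iIndepFun (Sum.elim X (Sum.elim Xhat Θ)) μ)
    (hcopy : ∀ i, μ.map (Xhat i) = μ.map (X i))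
    (hexp : ∀ i, ∀ s : ℝ, 0 ≤ s → μ {ω | s ≤ Θ i ω} = ENNReal.ofReal (Real.exp (-s)))
    (t : ℝ) (ht : 0 < t)
    (p : ℕ) (d : ℕ)
    (f : (Fin p → ℕ) → ℝ) (hker : IsKernel f) :
    μ[homSum p d f (fun i ω => if t ≤ Θ i ω then X i ω else Xhat i ω) |
        ⨆ i, MeasurableSpace.comap (X i) inferInstance]
      =ᵐ[μ] fun ω => Real.exp (-(p * t)) * homSum p d f X ω := by
  have hcopy' : ∀ i, IdentDistrib (Xhat i) (X i) μ μ := fun i =>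
    ⟨(hXhatmeas i).aemeasurable, (hXmeas i).aemeasurable, hcopy i⟩
  have hXhatint : ∀ i, Integrable (Xhat i) μ := fun i => (hcopy' i).integrable_iff.2 (hXint i)
  have hXhatmean : ∀ i, ∫ ω, Xhat i ω ∂μ = 0 := fun i => (hcopy' i).integral_eq.trans (hXmean i)
  have hq : ∀ i, μ.real {ω | t ≤ Θ i ω} = Real.exp (-t) := fun i => by
    rw [measureReal_def, hexp i t ht.le, ENNReal.toReal_ofReal (Real.exp_pos _).le]
  change μ[homSum p d f (resample t X Xhat Θ) | _] =ᵐ[μ] _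
  rw [homSum_eq_sum_smul]
  refine (condExp_sum_smul_ae_eq (L := fun i ω => Real.exp (-t) ^ Fintype.card (Fin p) *
    ∏ k, X (i k) ω) _ _ fun i _ hfi => ?_).trans (.of_forall fun ω => ?_)
  · have hj : Injective fun k => (i k : ℕ) := by_contra fun h => hfi (hker.2 _ h)
    exact ⟨integrable_prod_resample hXmeas hXhatmeas hΘmeas hXint hXhatint hIndep hj,
      condExp_prod_resample hXmeas hXhatmeas hΘmeas hXint hXhatint hXhatmean hq hIndep hj⟩
  · simp only [Finset.sum_apply, Pi.smul_apply, smul_eq_mul, homSum, Finset.mul_sum,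
      Fintype.card_fin, ← Real.exp_nat_mul]
    exact Finset.sum_congr rfl fun i _ => by ring_nf

/-- **Mehler-type formula for the exponential-clock exchangeable pair.** With
`X^t_i = X_i 1{θ_i ≥ t} + X̂_i 1{θ_i < t}`, where `X̂` is an independent copy of the
independent centered sequence `X` and `θ_i` are i.i.d. standard exponentials independent
of everything, one has `E[Q_p(f; X^t) | σ(X)] = e^{-pt} Q_p(f; X)` almost surely, for every
finitely supported kernel `f` of order `p ≥ 1`. -/
theorem stmt8 {Ω : Type*} [MeasurableSpace Ω] (μ : Measure Ω) [IsProbabilityMeasure μ]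
    (X Xhat Θ : ℕ → Ω → ℝ)
    (hXmeas : ∀ i, Measurable (X i)) (hXhatmeas : ∀ i, Measurable (Xhat i))
    (hΘmeas : ∀ i, Measurable (Θ i))
    (hXint : ∀ i, Integrable (X i) μ) (hXmean : ∀ i, ∫ ω, X i ω ∂μ = 0)
    (hIndep : iIndepFun (Sum.elim X (Sum.elim Xhat Θ)) μ)
    (hcopy : ∀ i, μ.map (Xhat i) = μ.map (X i))
    (hexp : ∀ i, ∀ s : ℝ, 0 ≤ s → μ {ω | s ≤ Θ i ω} = ENNReal.ofReal (Real.exp (-s)))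
    (t : ℝ) (ht : 0 < t)
    (p : ℕ) (hp : 1 ≤ p) (d : ℕ)
    (f : (Fin p → ℕ) → ℝ) (hker : IsKernel f)
    (hsupp : ∀ i : Fin p → ℕ, (∃ k, d ≤ i k) → f i = 0) :
    μ[homSum p d f (fun i ω => if t ≤ Θ i ω then X i ω else Xhat i ω) |
        ⨆ i, MeasurableSpace.comap (X i) inferInstance]
      =ᵐ[μ] fun ω => Real.exp (-(p * t)) * homSum p d f X ω :=
  stmt8_general μ X Xhat Θ hXmeas hXhatmeas hΘmeas hXint hXmean hIndep hcopy hexp t ht p d f hker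
end
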